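/- arXiv:2408.07805 — 2 statements merged into one kernel-verified Lean document; each statement's English description precedes it below -/
import Mathlib

section
/- Let G be a finite group and suppose G = G₁ · G₂ for subgroups G₁, G₂ (every element of G is a product of an element of G₁ and an element of G₂). Let (ρ, V) and (σ, W) be finite-dimensional complex representations of G such that ρ restricted to G₂ is trivial and σ restricted to G₂ is irreducible. Then the map Φ ↦ Φ ⊗ id_W defines an isomorphism from End_{G₁}(ρ|_{G₁}) to End_G(ρ ⊗ σ). In particular, if ρ|_{G₁} is irreducible, then ρ ⊗ σ is an irreducible representation of G. -/
/-!
For `g ∈ G₂` the operator `ρ g ⊗ σ g` is `id ⊗ σ g`, and Schur's lemma for `σ|_{G₂}` forces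
everything commuting with these to be of the form `f ⊗ id`: the blocks of such an operator
against functionals on `V` are scalars. Because `σ g` is invertible, `f ⊗ id` commutes with
`ρ g ⊗ σ g` exactly when `f` commutes with `ρ g`, and as `ρ` is trivial on `G₂` and `G = G₁ G₂`,
this is the same as commuting with `ρ(G₁)`. If `ρ|_{G₁}` is irreducible, Schur's lemma again
makes the commutant of `ρ ⊗ σ` scalar; by Maschke an invariant subspace is the range of an
equivariant projection, which must then be `0` or `id`.
-/

open scoped TensorProduct

namespace TensorProduct

section CommSemiring

variable {R V W : Type*} [CommSemiring R] [AddCommMonoid V] [Module R V] [AddCommMonoid W]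
  [Module R W]

theorem eq_zero_of_forall_lid_rTensor_eq_zero [Module.Free R V] {x : V ⊗[R] W}
    (h : ∀ φ : Module.Dual R V, TensorProduct.lid R W (φ.rTensor W x) = 0) : x = 0 := by
  let b := Module.Free.chooseBasis R V
  have hcoord : ∀ i y,
      equivFinsuppOfBasisLeft b y i = TensorProduct.lid R W ((b.coord i).rTensor W y) := by
    intro i y
    induction y <;> simp_all
  apply (equivFinsuppOfBasisLeft b).injective
  ext i
  simpa [hcoord] using h (b.coord i)

theorem lid_rTensor_comp_lTensor {W' : Type*} [AddCommMonoid W'] [Module R W']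
    (φ : Module.Dual R V) (b : W →ₗ[R] W') :
    (TensorProduct.lid R W').toLinearMap ∘ₗ φ.rTensor W' ∘ₗ b.lTensor V
      = b ∘ₗ (TensorProduct.lid R W).toLinearMap ∘ₗ φ.rTensor W := by
  ext v w
  simp

theorem apply_rid_lTensor (φ : Module.Dual R V) (ψ : Module.Dual R W) (x : V ⊗[R] W) :
    φ (TensorProduct.rid R V (ψ.lTensor V x)) = ψ (TensorProduct.lid R W (φ.rTensor W x)) := by
  induction x with
  | zero => simp
  | tmul v w => simp [mul_comm]
  | add x y hx hy => simp_all

end CommSemiring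

section Field

variable {k V V' W W' : Type*} [Field k] [AddCommGroup V] [Module k V] [AddCommGroup V']
  [Module k V'] [AddCommGroup W] [Module k W] [AddCommGroup W'] [Module k W']

theorem eq_zero_of_tmul_eq_zero_of_ne_zero {v : V} {w : W} (hw : w ≠ 0) (h : v ⊗ₜ[k] w = 0) :
    v = 0 := by
  rw [← Module.forall_dual_apply_eq_zero_iff k v]
  intro φ
  simpa [hw] using congrArg (fun x => TensorProduct.lid k W (φ.rTensor W x)) h

theorem map_left_injective_of_ne_zero {b : W →ₗ[k] W'} (hb : b ≠ 0) :
    Function.Injective fun a : V →ₗ[k] V' => TensorProduct.map a b := by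
  intro a a' h
  obtain ⟨w, hw⟩ : ∃ w, b w ≠ 0 := by
    by_contra! hzero
    exact hb (LinearMap.ext hzero)
  ext v
  have hvw := LinearMap.congr_fun h (v ⊗ₜ w)
  simp only [map_tmul] at hvw
  have hdiff : (a v - a' v) ⊗ₜ[k] b w = 0 := by rw [sub_tmul, hvw, sub_self]
  exact sub_eq_zero.1 (eq_zero_of_tmul_eq_zero_of_ne_zero hw hdiff)

end Field

end TensorProduct

open TensorProduct

section Commutant

variable {k V W : Type*} [Field k] [AddCommGroup V] [Module k V] [AddCommGroup W] [Module k W]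

theorem exists_eq_smul_id_of_forall_comp_eq [IsAlgClosed k] [FiniteDimensional k V]
    {S : Set (Module.End k V)}
    (hirr : ∀ q : Submodule k V, (∀ a ∈ S, q.map a ≤ q) → q = ⊥ ∨ q = ⊤)
    {f : Module.End k V} (hf : ∀ a ∈ S, f ∘ₗ a = a ∘ₗ f) : ∃ c : k, f = c • LinearMap.id := by
  cases subsingleton_or_nontrivial V
  · exact ⟨0, Subsingleton.elim _ _⟩
  obtain ⟨c, hc⟩ := Module.End.exists_eigenvalue f
  refine ⟨c, ?_⟩
  have hinv : ∀ a ∈ S, (f.eigenspace c).map a ≤ f.eigenspace c := fun a ha =>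
    Submodule.map_le_iff_le_comap.2
      (Module.End.mapsTo_genEigenspace_of_comm (hf a ha) c 1)
  have htop : f.eigenspace c = ⊤ := (hirr _ hinv).resolve_left hc
  ext v
  simpa using Module.End.mem_eigenspace_iff.1 (htop ▸ Submodule.mem_top : v ∈ f.eigenspace c)

theorem exists_eq_map_id_of_forall_comp_lTensor_eq [Nontrivial W] {S : Set (Module.End k W)}
    (hS : ∀ T : Module.End k W, (∀ a ∈ S, T ∘ₗ a = a ∘ₗ T) → ∃ c : k, T = c • LinearMap.id)
    {F : Module.End k (V ⊗[k] W)} (hF : ∀ a ∈ S, F ∘ₗ a.lTensor V = a.lTensor V ∘ₗ F) :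
    ∃ f : Module.End k V, F = TensorProduct.map f LinearMap.id := by
  obtain ⟨w₀, hw₀⟩ := exists_ne (0 : W)
  obtain ⟨ψ, hψ⟩ := Module.Projective.exists_dual_eq_one k hw₀
  -- `block φ v` is the entry of `F` in row `φ` and column `v`; Schur makes it a scalar `c φ v`.
  let block (φ : Module.Dual k V) (v : V) : Module.End k W :=
    (TensorProduct.lid k W).toLinearMap ∘ₗ φ.rTensor W ∘ₗ F ∘ₗ TensorProduct.mk k V W v
  have hblock : ∀ φ v, ∃ c : k, block φ v = c • LinearMap.id := fun φ v => hS _ fun a ha => by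
    ext w
    have hFa := LinearMap.congr_fun (hF a ha) (v ⊗ₜ w)
    simp only [LinearMap.comp_apply, LinearMap.lTensor_tmul] at hFa
    have hslice := LinearMap.congr_fun (lid_rTensor_comp_lTensor φ a) (F (v ⊗ₜ w))
    simp only [LinearMap.comp_apply] at hslice
    simp only [block, LinearMap.comp_apply, mk_apply, hFa, hslice]
  choose c hc using hblock
  have hblock_apply : ∀ φ v w, TensorProduct.lid k W (φ.rTensor W (F (v ⊗ₜ w))) = c φ v • w :=
    fun φ v w => by simpa [block] using LinearMap.congr_fun (hc φ v) w
  let f : Module.End k V := (TensorProduct.rid k V).toLinearMap ∘ₗ ψ.lTensor V ∘ₗ F ∘ₗ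
    (TensorProduct.mk k V W).flip w₀
  have hf_apply : ∀ φ v, φ (f v) = c φ v := fun φ v => by
    simpa [f, apply_rid_lTensor, hψ] using congrArg ψ (hblock_apply φ v w₀)
  refine ⟨f, TensorProduct.ext' fun v w => ?_⟩
  rw [← sub_eq_zero]
  refine eq_zero_of_forall_lid_rTensor_eq_zero fun φ => ?_
  simp [hblock_apply, hf_apply]

end Commutant

namespace Representation

section FiniteGroup

variable {G k U : Type*} [Group G] [Finite G] [Field k] [NeZero (Nat.card G : k)]
  [AddCommGroup U] [Module k U] (τ : Representation k G U)

theorem exists_isCompl_forall_map_le {q : Submodule k U} (hq : ∀ g, q.map (τ g) ≤ q) :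
    ∃ q' : Submodule k U, IsCompl q q' ∧ ∀ g, q'.map (τ g) ≤ q' := by
  let Q : Subrepresentation τ := ⟨q, fun g v hv => hq g ⟨v, hv, rfl⟩⟩
  obtain ⟨Q', hQQ'⟩ := exists_isCompl Q
  refine ⟨Q'.toSubmodule, .of_eq (congrArg Subrepresentation.toSubmodule hQQ'.inf_eq_bot)
    (congrArg Subrepresentation.toSubmodule hQQ'.sup_eq_top), ?_⟩
  rintro g _ ⟨v, hv, rfl⟩
  exact Q'.apply_mem_toSubmodule g hv

theorem eq_bot_or_eq_top_of_forall_comp_eq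
    (hcomm : ∀ F : Module.End k U, (∀ g, F ∘ₗ τ g = τ g ∘ₗ F) → ∃ c : k, F = c • LinearMap.id)
    {q : Submodule k U} (hq : ∀ g, q.map (τ g) ≤ q) : q = ⊥ ∨ q = ⊤ := by
  obtain ⟨q', hqq', hq'⟩ := τ.exists_isCompl_forall_map_le hq
  have hP := Submodule.isIdempotentElem_projection hqq'
  have hPτ : ∀ g, Commute (q.projection q' hqq') (τ g) := fun g =>
    (LinearMap.IsIdempotentElem.commute_iff hP).2
      ⟨by simpa [Module.End.mem_invtSubmodule_iff_map_le] using hq g,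
        by simpa [Module.End.mem_invtSubmodule_iff_map_le] using hq' g⟩
  obtain ⟨c, hc⟩ := hcomm _ fun g => (hPτ g).eq
  have hrange : LinearMap.range (c • LinearMap.id : Module.End k U) = q := by
    rw [← hc, Submodule.range_projection]
  by_cases hc0 : c = 0
  · left
    rw [← hrange, hc0, zero_smul, LinearMap.range_zero]
  · right
    rw [← hrange, LinearMap.range_smul _ _ hc0, LinearMap.range_id]

end FiniteGroup

theorem apply_ne_zero {G k W : Type*} [Group G] [Field k] [AddCommGroup W] [Module k W]
    [Nontrivial W] (σ : Representation k G W) (g : G) : σ g ≠ 0 := fun h =>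
  one_ne_zero (by rw [← map_one σ, ← mul_inv_cancel g, map_mul, h, zero_mul])

end Representation

section Factorization

variable {G k V W : Type*} [Group G] [Field k] [AddCommGroup V] [Module k V]
  [AddCommGroup W] [Module k W] {ρ : Representation k G V} {σ : Representation k G W}

theorem comp_eq_comp_of_forall_mem_of_trivial {G₁ G₂ : Subgroup G}
    (hprod : ∀ g : G, ∃ g₁ ∈ G₁, ∃ g₂ ∈ G₂, g = g₁ * g₂) (hρtriv : ∀ g ∈ G₂, ρ g = LinearMap.id)
    {f : Module.End k V} (hf : ∀ g ∈ G₁, f ∘ₗ ρ g = ρ g ∘ₗ f) (g : G) :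
    f ∘ₗ ρ g = ρ g ∘ₗ f := by
  obtain ⟨g₁, hg₁, g₂, hg₂, rfl⟩ := hprod g
  rw [map_mul, hρtriv g₂ hg₂]
  exact hf g₁ hg₁

theorem exists_eq_map_id_of_forall_comp_map_eq [IsAlgClosed k] [FiniteDimensional k W]
    [Nontrivial W] {G₂ : Subgroup G} (hρtriv : ∀ g ∈ G₂, ρ g = LinearMap.id)
    (hσirr : ∀ q : Submodule k W, (∀ g ∈ G₂, q.map (σ g) ≤ q) → q = ⊥ ∨ q = ⊤)
    {F : Module.End k (V ⊗[k] W)}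
    (hF : ∀ g, F ∘ₗ TensorProduct.map (ρ g) (σ g) = TensorProduct.map (ρ g) (σ g) ∘ₗ F) :
    ∃ f : Module.End k V, (∀ g, f ∘ₗ ρ g = ρ g ∘ₗ f) ∧ F = TensorProduct.map f LinearMap.id := by
  have hσschur : ∀ T : Module.End k W, (∀ a ∈ σ '' G₂, T ∘ₗ a = a ∘ₗ T) →
      ∃ c : k, T = c • LinearMap.id := fun T hT =>
    exists_eq_smul_id_of_forall_comp_eq (fun q hq => hσirr q (Set.forall_mem_image.1 hq)) hT
  obtain ⟨f, rfl⟩ := exists_eq_map_id_of_forall_comp_lTensor_eq hσschur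
    (Set.forall_mem_image.2 fun g hg => by
      simpa only [hρtriv g hg, ← LinearMap.lTensor_def] using hF g)
  refine ⟨f, fun g => map_left_injective_of_ne_zero (σ.apply_ne_zero g) ?_, rfl⟩
  simpa only [← map_comp, LinearMap.id_comp, LinearMap.comp_id] using hF g

end Factorization

/-- Let `G` be a finite group with `G = G₁ · G₂`, and `(ρ, V)`, `(σ, W)`
finite-dimensional complex representations of `G` such that `ρ|_{G₂}` is trivial and `σ|_{G₂}`
is irreducible.  Then `Φ ↦ Φ ⊗ id_W` is an isomorphism `End_{G₁}(ρ|_{G₁}) ≃ End_G(ρ ⊗ σ)`;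
in particular, if `ρ|_{G₁}` is irreducible, then `ρ ⊗ σ` is irreducible. -/
theorem stmt_8 {G : Type*} [Group G] [Fintype G] (G₁ G₂ : Subgroup G)
    (hprod : ∀ g : G, ∃ g₁ ∈ G₁, ∃ g₂ ∈ G₂, g = g₁ * g₂)
    {V W : Type*} [AddCommGroup V] [Module ℂ V] [FiniteDimensional ℂ V]
    [AddCommGroup W] [Module ℂ W] [FiniteDimensional ℂ W] [Nontrivial W]
    (ρ : Representation ℂ G V) (σ : Representation ℂ G W)
    (hρtriv : ∀ g ∈ G₂, ρ g = LinearMap.id)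
    (hσirr : ∀ q : Submodule ℂ W, (∀ g ∈ G₂, q.map (σ g) ≤ q) → q = ⊥ ∨ q = ⊤) :
    (∀ f : V →ₗ[ℂ] V, (∀ g ∈ G₁, f ∘ₗ ρ g = ρ g ∘ₗ f) → ∀ g : G,
        TensorProduct.map f LinearMap.id ∘ₗ TensorProduct.map (ρ g) (σ g)
          = TensorProduct.map (ρ g) (σ g) ∘ₗ TensorProduct.map f LinearMap.id) ∧
    (Function.Injective
        fun f : V →ₗ[ℂ] V => TensorProduct.map f (LinearMap.id : W →ₗ[ℂ] W)) ∧
    (∀ F : (V ⊗[ℂ] W) →ₗ[ℂ] (V ⊗[ℂ] W),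
        (∀ g : G, F ∘ₗ TensorProduct.map (ρ g) (σ g)
            = TensorProduct.map (ρ g) (σ g) ∘ₗ F) →
        ∃ f : V →ₗ[ℂ] V, (∀ g ∈ G₁, f ∘ₗ ρ g = ρ g ∘ₗ f) ∧
          F = TensorProduct.map f LinearMap.id) ∧
    ((∀ q : Submodule ℂ V, (∀ g ∈ G₁, q.map (ρ g) ≤ q) → q = ⊥ ∨ q = ⊤) →
      ∀ q : Submodule ℂ (V ⊗[ℂ] W),
        (∀ g : G, q.map (TensorProduct.map (ρ g) (σ g)) ≤ q) → q = ⊥ ∨ q = ⊤) := by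
  refine ⟨fun f hf g => ?_, map_left_injective_of_ne_zero one_ne_zero, fun F hF => ?_,
    fun hρirr q hq => ?_⟩
  · rw [← map_comp, ← map_comp, comp_eq_comp_of_forall_mem_of_trivial hprod hρtriv hf g,
      LinearMap.id_comp, LinearMap.comp_id]
  · obtain ⟨f, hf, rfl⟩ := exists_eq_map_id_of_forall_comp_map_eq hρtriv hσirr hF
    exact ⟨f, fun g _ => hf g, rfl⟩
  · refine (ρ.tprod σ).eq_bot_or_eq_top_of_forall_comp_eq (fun F hF => ?_) hq
    obtain ⟨f, hf, rfl⟩ := exists_eq_map_id_of_forall_comp_map_eq hρtriv hσirr hF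
    obtain ⟨c, rfl⟩ := exists_eq_smul_id_of_forall_comp_eq (S := ρ '' G₁)
      (fun q hq => hρirr q (Set.forall_mem_image.1 hq)) (Set.forall_mem_image.2 fun g _ => hf g)
    exact ⟨c, by rw [map_smul_left, map_id]⟩
end

section
/- Let G be a finite group, N₂ ⊆ N₁ subgroups of G, and K a subgroup of G normalizing both N₁ and N₂, such that N₁ ∩ (K·N₂) = N₂. Form the semidirect products K ⋉ N₁ and K ⋉ N₂ (with K acting by conjugation), and let τ be a finite-dimensional complex representation of the subgroup K·N₂ of G. Let inf(τ) be the representation of K ⋉ N₂ obtained by pulling back τ along the multiplication map K ⋉ N₂ → K·N₂, (k,n) ↦ kn. Then the induced representation Ind_{K ⋉ N₂}^{K ⋉ N₁}(inf(τ)) is isomorphic to the pullback along the multiplication map K ⋉ N₁ → K·N₁ of the induced representation Ind_{K·N₂}^{K·N₁}(τ). -/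
/-- The function-space model of the representation of `B` induced from a representation `τ` of
`A` along a homomorphism `ι : A →* B`: the space of functions `f : B → V` with
`f (ι a * b) = τ a (f b)`, on which `B` acts by right translation. -/
def inducedSubmodule {A B : Type*} [Group A] [Group B] (ι : A →* B)
    {V : Type*} [AddCommGroup V] [Module ℂ V] (τ : Representation ℂ A V) :
    Submodule ℂ (B → V) where
  carrier := {f | ∀ (a : A) (b : B), f (ι a * b) = τ a (f b)}
  add_mem' := by
    intro f g hf hg a b
    simp only [Pi.add_apply, hf a b, hg a b, map_add]
  zero_mem' := by
    intro a b
    simp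
  smul_mem' := by
    intro c f hf a b
    simp only [Pi.smul_apply, hf a b, map_smul]

/-- Let `G` be a finite group, `N₂ ⊆ N₁` subgroups, `K` a subgroup normalizing
both with `N₁ ∩ (K·N₂) = N₂`.  Form the semidirect products with `K` acting by conjugation, and
let `τ` be a finite-dimensional complex representation of `K·N₂`.  Then the induction to
`N₁ ⋊ K` of the pullback (inflation) of `τ` along the multiplication map `N₂ ⋊ K → K·N₂` is
isomorphic to the pullback along the multiplication map `N₁ ⋊ K → K·N₁` of the induction of `τ`
from `K·N₂` to `K·N₁`. -/
theorem stmt_10 {G : Type*} [Group G] [Fintype G]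
    (K N₁ N₂ S₁ S₂ : Subgroup G) (h21 : N₂ ≤ N₁) (hS21 : S₂ ≤ S₁)
    (hK1 : ∀ k ∈ K, ∀ n ∈ N₁, k * n * k⁻¹ ∈ N₁)
    (hK2 : ∀ k ∈ K, ∀ n ∈ N₂, k * n * k⁻¹ ∈ N₂)
    (hS1 : (S₁ : Set G) = {x | ∃ k ∈ K, ∃ n ∈ N₁, x = k * n})
    (hS2 : (S₂ : Set G) = {x | ∃ k ∈ K, ∃ n ∈ N₂, x = k * n})
    (hint : ∀ x ∈ N₁, x ∈ S₂ → x ∈ N₂)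
    (φ₁ : ↥K →* MulAut ↥N₁)
    (hφ₁ : ∀ (k : ↥K) (n : ↥N₁), ((φ₁ k n : ↥N₁) : G) = ↑k * ↑n * (↑k : G)⁻¹)
    (φ₂ : ↥K →* MulAut ↥N₂)
    (hφ₂ : ∀ (k : ↥K) (n : ↥N₂), ((φ₂ k n : ↥N₂) : G) = ↑k * ↑n * (↑k : G)⁻¹)
    (μ₁ : (↥N₁ ⋊[φ₁] ↥K) →* ↥S₁)
    (hμ₁ : ∀ p : ↥N₁ ⋊[φ₁] ↥K, ((μ₁ p : G)) = ↑p.left * ↑p.right)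
    (μ₂ : (↥N₂ ⋊[φ₂] ↥K) →* ↥S₂)
    (hμ₂ : ∀ p : ↥N₂ ⋊[φ₂] ↥K, ((μ₂ p : G)) = ↑p.left * ↑p.right)
    (j : (↥N₂ ⋊[φ₂] ↥K) →* (↥N₁ ⋊[φ₁] ↥K))
    (hj : ∀ p : ↥N₂ ⋊[φ₂] ↥K, (((j p).left : G) = ↑p.left) ∧ (j p).right = p.right)
    {V : Type*} [AddCommGroup V] [Module ℂ V] [FiniteDimensional ℂ V]
    (τ : Representation ℂ ↥S₂ V) :
    ∃ e : ↥(inducedSubmodule j (MonoidHom.comp τ μ₂))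
          ≃ₗ[ℂ] ↥(inducedSubmodule (Subgroup.inclusion hS21) τ),
      ∀ (q : ↥N₁ ⋊[φ₁] ↥K) (f g : ↥(inducedSubmodule j (MonoidHom.comp τ μ₂))),
        ((g : (↥N₁ ⋊[φ₁] ↥K) → V) = fun x => (f : (↥N₁ ⋊[φ₁] ↥K) → V) (x * q)) →
        ((e g : ↥S₁ → V) = fun s => (e f : ↥S₁ → V) (s * μ₁ q)) := by
  -- surjectivity of μ₁
  have hμ₁surj : Function.Surjective μ₁ := by
    rintro ⟨s, hs⟩
    have hs' : s ∈ {x | ∃ k ∈ K, ∃ n ∈ N₁, x = k * n} := by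
      rw [← hS1]; exact hs
    obtain ⟨k, hkK, n, hnN, rfl⟩ := hs'
    refine ⟨⟨⟨k * n * k⁻¹, hK1 k hkK n hnN⟩, ⟨k, hkK⟩⟩, ?_⟩
    apply Subtype.ext
    rw [hμ₁]
    show (k * n * k⁻¹) * k = k * n
    group
  -- surjectivity of μ₂
  have hμ₂surj : Function.Surjective μ₂ := by
    rintro ⟨s, hs⟩
    have hs' : s ∈ {x | ∃ k ∈ K, ∃ n ∈ N₂, x = k * n} := by
      rw [← hS2]; exact hs
    obtain ⟨k, hkK, n, hnN, rfl⟩ := hs'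
    refine ⟨⟨⟨k * n * k⁻¹, hK2 k hkK n hnN⟩, ⟨k, hkK⟩⟩, ?_⟩
    apply Subtype.ext
    rw [hμ₂]
    show (k * n * k⁻¹) * k = k * n
    group
  -- compatibility : μ₁ ∘ j = inclusion ∘ μ₂
  have hcomp : ∀ a : ↥N₂ ⋊[φ₂] ↥K, μ₁ (j a) = Subgroup.inclusion hS21 (μ₂ a) := by
    intro a
    apply Subtype.ext
    rw [hμ₁, (hj a).2, Subgroup.coe_inclusion, hμ₂]
    rw [(hj a).1]
  -- well-definedness key lemma
  have key : ∀ (h : (↥N₁ ⋊[φ₁] ↥K) → V),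
      (∀ a b, h (j a * b) = τ (μ₂ a) (h b)) →
      ∀ p p', μ₁ p = μ₁ p' → h p = h p' := by
    intro h hh p p' hpp
    set z := p' * p⁻¹ with hz
    have hz1 : μ₁ z = 1 := by
      rw [hz, map_mul, map_inv, hpp, mul_inv_cancel]
    have hzG : (z.left : G) * (z.right : G) = 1 := by
      have h2 := hμ₁ z
      rw [hz1] at h2
      simpa using h2.symm
    have hrS : ((z.right : G) : G) ∈ S₂ := by
      have : ((z.right : G)) ∈ (S₂ : Set G) := by
        rw [hS2]
        exact ⟨z.right, z.right.2, 1, one_mem _, by simp⟩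
      exact this
    have hlS : ((z.left : G)) ∈ S₂ := by
      have hle : (z.left : G) = (z.right : G)⁻¹ := eq_inv_of_mul_eq_one_left hzG
      rw [hle]
      exact inv_mem hrS
    have hleft2 : ((z.left : G)) ∈ N₂ := hint _ z.left.2 hlS
    set q : ↥N₂ ⋊[φ₂] ↥K := ⟨⟨(z.left : G), hleft2⟩, z.right⟩ with hqdef
    have hjq : j q = z := by
      refine SemidirectProduct.ext ?_ ?_
      · exact Subtype.ext ((hj q).1)
      · exact (hj q).2
    have hq2 : μ₂ q = 1 := by
      apply Subtype.ext
      rw [hμ₂]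
      simpa using hzG
    have hstep : h p' = h (j q * p) := by
      rw [hjq, hz]
      congr 1
      group
    rw [hstep, hh q p, hq2, map_one]
    rfl
  -- the comparison linear map
  let T : ↥(inducedSubmodule (Subgroup.inclusion hS21) τ) →ₗ[ℂ]
      ↥(inducedSubmodule j (MonoidHom.comp τ μ₂)) :=
    { toFun := fun f => ⟨fun p => (f : ↥S₁ → V) (μ₁ p), by
        intro a b
        show (f : ↥S₁ → V) (μ₁ (j a * b)) = τ (μ₂ a) ((f : ↥S₁ → V) (μ₁ b))
        rw [map_mul, hcomp a]
        exact f.2 (μ₂ a) (μ₁ b)⟩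
      map_add' := fun f g => rfl
      map_smul' := fun c f => rfl }
  have hTinj : Function.Injective T := by
    intro f g hfg
    apply Subtype.ext
    funext s
    obtain ⟨p, rfl⟩ := hμ₁surj s
    exact congrFun (congrArg Subtype.val hfg) p
  have hTsurj : Function.Surjective T := by
    intro h
    have hh : ∀ a b, (h : (↥N₁ ⋊[φ₁] ↥K) → V) (j a * b)
        = τ (μ₂ a) ((h : (↥N₁ ⋊[φ₁] ↥K) → V) b) := h.2
    choose sec hsec using hμ₁surj
    refine ⟨⟨fun s => (h : (↥N₁ ⋊[φ₁] ↥K) → V) (sec s), ?_⟩, ?_⟩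
    · intro a s
      obtain ⟨qa, hqa⟩ := hμ₂surj a
      have hmul : μ₁ (j qa * sec s) = Subgroup.inclusion hS21 a * s := by
        rw [map_mul, hcomp, hqa, hsec]
      show (h : (↥N₁ ⋊[φ₁] ↥K) → V) (sec (Subgroup.inclusion hS21 a * s))
          = τ a ((h : (↥N₁ ⋊[φ₁] ↥K) → V) (sec s))
      rw [key (h : (↥N₁ ⋊[φ₁] ↥K) → V) hh _ _ ((hsec _).trans hmul.symm)]
      rw [hh, hqa]
    · apply Subtype.ext
      funext p
      exact key (h : (↥N₁ ⋊[φ₁] ↥K) → V) hh _ _ (hsec (μ₁ p))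
  let E := LinearEquiv.ofBijective T ⟨hTinj, hTsurj⟩
  refine ⟨E.symm, ?_⟩
  have he : ∀ (f : ↥(inducedSubmodule j (MonoidHom.comp τ μ₂))) (p : ↥N₁ ⋊[φ₁] ↥K),
      ((E.symm f : ↥S₁ → V)) (μ₁ p) = (f : (↥N₁ ⋊[φ₁] ↥K) → V) p := by
    intro f p
    have h2 := E.apply_symm_apply f
    exact congrFun (congrArg Subtype.val h2) p
  intro q f g hg
  funext s
  obtain ⟨p, rfl⟩ := hμ₁surj s
  rw [← map_mul, he, he]
  exact congrFun hg p
end
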